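/- For a proper subdomain G of R^n, p ≥ 1, and points z1, z2 ∈ G: |z1-z2| / ( |z1-z2| + 2 min{d_G(z1), d_G(z2)} ) ≤ b_{G,p}(z1,z2) ≤ |z1-z2| / ( d_G(z1)^p + d_G(z2)^p )^{1/p}, where d_G(z) = dist(z, ∂G). -/

import Mathlib

/-!
Every boundary point `w` satisfies `d_G(z₁) ≤ |z₁ - w|` and `d_G(z₂) ≤ |w - z₂|`, which
bounds each quotient in the supremum, hence the supremum, from above. For the lower bound take
a nearest boundary point `w` to the point `z₁`, say, realising the minimum. Since the `ℓᵖ` norm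
is at most the `ℓ¹` norm for `p ≥ 1`, the denominator at `w` is at most
`|z₁ - w| + |w - z₂| ≤ 2 d_G(z₁) + |z₁ - z₂|`.
-/

open Set Metric

/-- Barrlund distance with parameter `p` in a domain `G`. -/
noncomputable def barrlund {n : ℕ} (G : Set (EuclideanSpace ℝ (Fin n))) (p : ℝ)
    (x y : EuclideanSpace ℝ (Fin n)) : ℝ :=
  sSup ((fun w => dist x y / (dist x w ^ p + dist w y ^ p) ^ (1 / p)) '' frontier G)

section BarrlundTerm

variable {α : Type*} [PseudoMetricSpace α] {p : ℝ} {x y w : α}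

noncomputable def barrlundTerm (p : ℝ) (x y w : α) : ℝ :=
  dist x y / (dist x w ^ p + dist w y ^ p) ^ (1 / p)

lemma barrlundTerm_comm (p : ℝ) (x y w : α) : barrlundTerm p x y w = barrlundTerm p y x w := by
  rw [barrlundTerm, barrlundTerm, dist_comm y x, dist_comm x w, dist_comm w y, add_comm]

lemma barrlundTerm_le_of_mem {S : Set α} (hp : 0 < p) (hx : 0 < infDist x S) (hw : w ∈ S) :
    barrlundTerm p x y w ≤ dist x y / (infDist x S ^ p + infDist y S ^ p) ^ (1 / p) := by
  have hxw : infDist x S ≤ dist x w := infDist_le_dist_of_mem hw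
  have hyw : infDist y S ≤ dist w y := dist_comm y w ▸ infDist_le_dist_of_mem hw
  have hy : 0 ≤ infDist y S := infDist_nonneg
  unfold barrlundTerm
  gcongr

lemma div_add_two_mul_dist_le_barrlundTerm (hp : 1 ≤ p) (hxw : 0 < dist x w) :
    dist x y / (dist x y + 2 * dist x w) ≤ barrlundTerm p x y w := by
  have hle : (dist x w ^ p + dist w y ^ p) ^ (1 / p) ≤ dist x y + 2 * dist x w :=
    calc (dist x w ^ p + dist w y ^ p) ^ (1 / p)
        ≤ dist x w + dist w y := Real.rpow_add_rpow_le_add dist_nonneg dist_nonneg hp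
      _ ≤ dist x w + (dist w x + dist x y) := by gcongr; exact dist_triangle w x y
      _ = dist x y + 2 * dist x w := by rw [dist_comm w x]; ring
  unfold barrlundTerm
  gcongr

end BarrlundTerm

lemma infDist_frontier_pos {α : Type*} [PseudoMetricSpace α] {G : Set α} {x : α}
    (hG : IsOpen G) (hne : (frontier G).Nonempty) (hx : x ∈ G) : 0 < infDist x (frontier G) :=
  (isClosed_frontier.notMem_iff_infDist_pos hne).1
    fun hxG => (disjoint_frontier_iff_isOpen.2 hG).notMem_of_mem_left hxG hx

section Barrlund

variable {n : ℕ} {G : Set (EuclideanSpace ℝ (Fin n))} {p : ℝ}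
  {x y : EuclideanSpace ℝ (Fin n)}

variable (G p x y) in
lemma barrlund_eq_sSup : barrlund G p x y = sSup (barrlundTerm p x y '' frontier G) := rfl

variable (G p x y) in
lemma barrlund_comm : barrlund G p x y = barrlund G p y x := by
  simp only [barrlund_eq_sSup, barrlundTerm_comm p x y]

lemma barrlund_le (hG : IsOpen G) (hne : (frontier G).Nonempty) (hp : 0 < p) (hx : x ∈ G) :
    barrlund G p x y ≤
      dist x y / (infDist x (frontier G) ^ p + infDist y (frontier G) ^ p) ^ (1 / p) := by
  have hxpos := infDist_frontier_pos hG hne hx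
  rw [barrlund_eq_sSup]
  exact csSup_le (hne.image _) (forall_mem_image.2 fun _ hw => barrlundTerm_le_of_mem hp hxpos hw)

lemma div_add_two_mul_infDist_le_barrlund (hG : IsOpen G) (hne : (frontier G).Nonempty)
    (hp : 1 ≤ p) (hx : x ∈ G) :
    dist x y / (dist x y + 2 * infDist x (frontier G)) ≤ barrlund G p x y := by
  have hxpos := infDist_frontier_pos hG hne hx
  obtain ⟨w, hw, hxw⟩ := isClosed_frontier.exists_infDist_eq_dist hne x
  have hbdd : BddAbove (barrlundTerm p x y '' frontier G) :=
    ⟨_, forall_mem_image.2 fun _ hw' =>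
      barrlundTerm_le_of_mem (y := y) (zero_lt_one.trans_le hp) hxpos hw'⟩
  rw [barrlund_eq_sSup, hxw]
  exact (div_add_two_mul_dist_le_barrlundTerm hp (hxw ▸ hxpos)).trans
    (le_csSup hbdd (mem_image_of_mem _ hw))

end Barrlund

theorem stmt18_general {n : ℕ} (G : Set (EuclideanSpace ℝ (Fin n)))
    (hG : IsOpen G) (hGne : G ≠ univ)
    (p : ℝ) (hp : 1 ≤ p) (z1 z2 : EuclideanSpace ℝ (Fin n)) (hz1 : z1 ∈ G) (hz2 : z2 ∈ G) :
    dist z1 z2 /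
        (dist z1 z2 + 2 * min (infDist z1 (frontier G)) (infDist z2 (frontier G))) ≤
      barrlund G p z1 z2 ∧
    barrlund G p z1 z2 ≤
      dist z1 z2 / (infDist z1 (frontier G) ^ p + infDist z2 (frontier G) ^ p) ^ (1 / p) := by
  have hne : (frontier G).Nonempty := nonempty_frontier_iff.2 ⟨⟨z1, hz1⟩, hGne⟩
  refine ⟨?_, barrlund_le hG hne (zero_lt_one.trans_le hp) hz1⟩
  rcases le_total (infDist z1 (frontier G)) (infDist z2 (frontier G)) with h | h
  · rw [min_eq_left h]
    exact div_add_two_mul_infDist_le_barrlund hG hne hp hz1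
  · rw [min_eq_right h, dist_comm, barrlund_comm]
    exact div_add_two_mul_infDist_le_barrlund hG hne hp hz2

theorem stmt18 {n : ℕ} (G : Set (EuclideanSpace ℝ (Fin n)))
    (hG : IsOpen G) (hGc : IsConnected G) (hGne : G ≠ univ)
    (p : ℝ) (hp : 1 ≤ p) (z1 z2 : EuclideanSpace ℝ (Fin n)) (hz1 : z1 ∈ G) (hz2 : z2 ∈ G) :
    dist z1 z2 /
        (dist z1 z2 + 2 * min (infDist z1 (frontier G)) (infDist z2 (frontier G))) ≤
      barrlund G p z1 z2 ∧
    barrlund G p z1 z2 ≤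
      dist z1 z2 / (infDist z1 (frontier G) ^ p + infDist z2 (frontier G) ^ p) ^ (1 / p) :=
  stmt18_general G hG hGne p hp z1 z2 hz1 hz2
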